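/- arXiv:1105.4580 — 2 statements merged into one kernel-verified Lean document; each statement's English description precedes it below -/
import Mathlib

section
/- For all bicomplex numbers z, w ∈ 𝕋: χₑ(z, w) ≥ ‖z - w‖ / (sqrt(1 + 2‖z‖²) · sqrt(1 + 2‖w‖²)). -/
/-- The bicomplex numbers `𝕋`, represented as pairs `(z₁, z₂)` meaning `z₁ + z₂ i₂`. -/
abbrev Bicomplex := ℂ × ℂ

/-- The projection `P₁(z₁ + z₂ i₂) = z₁ - z₂ i₁`. -/
def P1 (w : Bicomplex) : ℂ := w.1 - w.2 * Complex.I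

/-- The projection `P₂(z₁ + z₂ i₂) = z₁ + z₂ i₁`. -/
def P2 (w : Bicomplex) : ℂ := w.1 + w.2 * Complex.I

/-- The Euclidean norm on `𝕋 ≅ ℝ⁴`: `‖z₁ + z₂ i₂‖² = |z₁|² + |z₂|²`. -/
noncomputable def Bnorm (w : Bicomplex) : ℝ := Real.sqrt (‖w.1‖ ^ 2 + ‖w.2‖ ^ 2)

/-- The chordal metric on `ℂ`: `χ(a,b) = |a-b| / (sqrt(1+|a|²) sqrt(1+|b|²))`. -/
noncomputable def chord (a b : ℂ) : ℝ :=
  ‖a - b‖ / (Real.sqrt (1 + ‖a‖ ^ 2) * Real.sqrt (1 + ‖b‖ ^ 2))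

/-- The bicomplex chordal metric (restricted to `𝕋`):
`χₑ(z,w) = sqrt((χ(P₁z, P₁w)² + χ(P₂z, P₂w)²)/2)`. -/
noncomputable def chiE (z w : Bicomplex) : ℝ :=
  Real.sqrt ((chord (P1 z) (P1 w) ^ 2 + chord (P2 z) (P2 w) ^ 2) / 2)

/-! Both projections are contractions up to the factor `√2` (`|Pᵢ u|² ≤ 2‖u‖²`), so the
denominators `(1 + |Pᵢ z|²)(1 + |Pᵢ w|²)` of the two complex chordal distances are at most
`(1 + 2‖z‖²)(1 + 2‖w‖²)`. Bounding both denominators by this common value, the mean of the two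
squared chordal distances is at least `(|P₁(z-w)|² + |P₂(z-w)|²) / 2 = ‖z - w‖²` over it. -/

lemma Bnorm_sq (w : Bicomplex) : Bnorm w ^ 2 = ‖w.1‖ ^ 2 + ‖w.2‖ ^ 2 :=
  Real.sq_sqrt (by positivity)

lemma P1_sub (z w : Bicomplex) : P1 (z - w) = P1 z - P1 w := by
  simp only [P1, Prod.fst_sub, Prod.snd_sub]; ring

lemma P2_sub (z w : Bicomplex) : P2 (z - w) = P2 z - P2 w := by
  simp only [P2, Prod.fst_sub, Prod.snd_sub]; ring

lemma norm_P1_sq_add_norm_P2_sq (u : Bicomplex) :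
    ‖P1 u‖ ^ 2 + ‖P2 u‖ ^ 2 = 2 * Bnorm u ^ 2 := by
  simp only [Bnorm_sq, P1, P2, Complex.sq_norm, Complex.normSq_apply,
    Complex.sub_re, Complex.sub_im, Complex.add_re, Complex.add_im,
    Complex.mul_re, Complex.mul_im, Complex.I_re, Complex.I_im]
  ring

lemma one_add_norm_P1_sq_le (u : Bicomplex) : 1 + ‖P1 u‖ ^ 2 ≤ 1 + 2 * Bnorm u ^ 2 := by
  linarith [norm_P1_sq_add_norm_P2_sq u, sq_nonneg ‖P2 u‖]

lemma one_add_norm_P2_sq_le (u : Bicomplex) : 1 + ‖P2 u‖ ^ 2 ≤ 1 + 2 * Bnorm u ^ 2 := by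
  linarith [norm_P1_sq_add_norm_P2_sq u, sq_nonneg ‖P1 u‖]

lemma chord_sq (a b : ℂ) :
    chord a b ^ 2 = ‖a - b‖ ^ 2 / ((1 + ‖a‖ ^ 2) * (1 + ‖b‖ ^ 2)) := by
  rw [chord, div_pow, mul_pow, Real.sq_sqrt (by positivity), Real.sq_sqrt (by positivity)]

lemma norm_sub_sq_div_le_chord_sq {a b : ℂ} {A B : ℝ} (ha : 1 + ‖a‖ ^ 2 ≤ A)
    (hb : 1 + ‖b‖ ^ 2 ≤ B) : ‖a - b‖ ^ 2 / (A * B) ≤ chord a b ^ 2 := by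
  rw [chord_sq]
  have hA : 0 ≤ A := le_trans (by positivity) ha
  gcongr

/-- For all bicomplex numbers `z, w`:
`χₑ(z, w) ≥ ‖z - w‖ / (sqrt(1 + 2‖z‖²) · sqrt(1 + 2‖w‖²))`. -/
theorem chiE_lower_bound (z w : Bicomplex) :
    chiE z w ≥ Bnorm (z - w) /
      (Real.sqrt (1 + 2 * Bnorm z ^ 2) * Real.sqrt (1 + 2 * Bnorm w ^ 2)) := by
  set A := 1 + 2 * Bnorm z ^ 2
  set B := 1 + 2 * Bnorm w ^ 2
  have hAB : 0 < A * B := by positivity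
  have h1 := norm_sub_sq_div_le_chord_sq (one_add_norm_P1_sq_le z) (one_add_norm_P1_sq_le w)
  have h2 := norm_sub_sq_div_le_chord_sq (one_add_norm_P2_sq_le z) (one_add_norm_P2_sq_le w)
  have hsum : ‖P1 z - P1 w‖ ^ 2 + ‖P2 z - P2 w‖ ^ 2 = 2 * Bnorm (z - w) ^ 2 := by
    rw [← P1_sub, ← P2_sub, norm_P1_sq_add_norm_P2_sq]
  rw [ge_iff_le, chiE, ← Real.sqrt_mul (by positivity),
    ← Real.sqrt_sq (by unfold Bnorm; positivity : 0 ≤ Bnorm (z - w)), ← Real.sqrt_div' _ hAB.le]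
  refine Real.sqrt_le_sqrt ?_
  calc Bnorm (z - w) ^ 2 / (A * B)
      = (‖P1 z - P1 w‖ ^ 2 / (A * B) + ‖P2 z - P2 w‖ ^ 2 / (A * B)) / 2 := by
        rw [← add_div, hsum]; ring
    _ ≤ _ := by gcongr
end

section
/- There exist bicomplex numbers z, w with ‖z‖ ≤ ‖w‖ but χₑ(0, z) > χₑ(0, w); for instance z = (1+2i₁)e₁ + (2+3i₁)e₂ and w = (1+i₁)e₁ + (3+3i₁)e₂ satisfy ‖z‖ ≤ ‖w‖ and χₑ(0,z)² = 0.88 > 0.80 = χₑ(0,w)². -/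
/-- The bicomplex number with idempotent components `a, b`, i.e. `a e₁ + b e₂`,
written in the coordinates `z₁ + z₂ i₂`. -/
noncomputable def fromIdem (a b : ℂ) : Bicomplex := ((a + b) / 2, (a - b) * Complex.I / 2)

/- In idempotent coordinates, `‖w‖²` is the mean of `t₁ = |P₁w|²` and `t₂ = |P₂w|²`, whereas
`χₑ(0,w)²` is the mean of `t/(1+t)` over the same two values. Since `t ↦ t/(1+t)` is strictly
concave, spreading the pair out can raise the mean of the `tᵢ` while lowering the mean of the
`tᵢ/(1+tᵢ)`: the pairs `(5, 13)` and `(2, 18)` give `9 ≤ 10` but `0.88 > 0.80`. -/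

lemma P1_fromIdem (a b : ℂ) : P1 (fromIdem a b) = a := by
  unfold P1 fromIdem
  linear_combination (b - a) / 2 * Complex.I_sq

lemma P2_fromIdem (a b : ℂ) : P2 (fromIdem a b) = b := by
  unfold P2 fromIdem
  linear_combination (a - b) / 2 * Complex.I_sq

lemma Bnorm_fromIdem (a b : ℂ) : Bnorm (fromIdem a b) = √((‖a‖ ^ 2 + ‖b‖ ^ 2) / 2) := by
  have h₁ : ‖(a + b) / 2‖ = ‖a + b‖ / 2 := by simp
  have h₂ : ‖(a - b) * Complex.I / 2‖ = ‖a - b‖ / 2 := by simp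
  unfold Bnorm fromIdem
  rw [h₁, h₂]
  congr 1
  linarith [parallelogram_law_with_norm ℝ a b]

lemma chord_zero_left_sq (a : ℂ) : chord 0 a ^ 2 = ‖a‖ ^ 2 / (1 + ‖a‖ ^ 2) := by
  unfold chord
  rw [zero_sub, norm_neg, norm_zero, div_pow, mul_pow, Real.sq_sqrt (by positivity),
    Real.sq_sqrt (by positivity)]
  norm_num

lemma chiE_zero_fromIdem (a b : ℂ) :
    chiE 0 (fromIdem a b) = √((‖a‖ ^ 2 / (1 + ‖a‖ ^ 2) + ‖b‖ ^ 2 / (1 + ‖b‖ ^ 2)) / 2) := by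
  have hP1 : P1 0 = 0 := by simp [P1]
  have hP2 : P2 0 = 0 := by simp [P2]
  rw [chiE, hP1, hP2, P1_fromIdem, P2_fromIdem, chord_zero_left_sq, chord_zero_left_sq]

/-- There exist bicomplex numbers `z, w` with `‖z‖ ≤ ‖w‖` but `χₑ(0, z) > χₑ(0, w)`;
for instance `z = (1+2i₁)e₁ + (2+3i₁)e₂` and `w = (1+i₁)e₁ + (3+3i₁)e₂`. -/
theorem chiE_not_norm_monotone :
    (Bnorm (fromIdem (1 + 2 * Complex.I) (2 + 3 * Complex.I)) ≤
        Bnorm (fromIdem (1 + Complex.I) (3 + 3 * Complex.I)) ∧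
      chiE 0 (fromIdem (1 + 2 * Complex.I) (2 + 3 * Complex.I)) >
        chiE 0 (fromIdem (1 + Complex.I) (3 + 3 * Complex.I))) ∧
    ∃ z w : Bicomplex, Bnorm z ≤ Bnorm w ∧ chiE 0 z > chiE 0 w := by
  have h₁ : ‖1 + 2 * Complex.I‖ ^ 2 = 5 := by
    norm_num [Complex.sq_norm, Complex.normSq_apply]
  have h₂ : ‖2 + 3 * Complex.I‖ ^ 2 = 13 := by
    norm_num [Complex.sq_norm, Complex.normSq_apply]
  have h₃ : ‖1 + Complex.I‖ ^ 2 = 2 := by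
    norm_num [Complex.sq_norm, Complex.normSq_apply]
  have h₄ : ‖3 + 3 * Complex.I‖ ^ 2 = 18 := by
    norm_num [Complex.sq_norm, Complex.normSq_apply]
  have hBnorm : Bnorm (fromIdem (1 + 2 * Complex.I) (2 + 3 * Complex.I)) ≤
      Bnorm (fromIdem (1 + Complex.I) (3 + 3 * Complex.I)) := by
    rw [Bnorm_fromIdem, Bnorm_fromIdem, h₁, h₂, h₃, h₄]
    exact Real.sqrt_le_sqrt (by norm_num)
  have hChiE : chiE 0 (fromIdem (1 + 2 * Complex.I) (2 + 3 * Complex.I)) >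
      chiE 0 (fromIdem (1 + Complex.I) (3 + 3 * Complex.I)) := by
    rw [chiE_zero_fromIdem, chiE_zero_fromIdem, h₁, h₂, h₃, h₄]
    exact Real.sqrt_lt_sqrt (by positivity) (by norm_num)
  exact ⟨⟨hBnorm, hChiE⟩, _, _, hBnorm, hChiE⟩
end
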